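/- On the arc set of the subobject classifier Ω of graphs, the conjunction operation ∧ (classifying ⟨⊤,⊤⟩ : 1 → Ω × Ω) computes the meet with respect to the order 0_A < s, t < st < A (with s and t incomparable). -/

import Mathlib

/-!
Characteristic maps into `Ω` are unique, and `&&` on nodes together with `meetA` on arcs is a
graph morphism `Ω × Ω → Ω` classifying `⟨⊤,⊤⟩`; so `∧` is `meetA` on arcs, and that `meetA` is
the meet for `leA` is a finite check.
-/

/-- A directed graph: nodes, arcs, source and target maps. -/
structure DGraph where
  N : Type
  A : Type
  src : A → N
  tgt : A → N

/-- A graph morphism. -/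
@[ext]
structure Hom (G H : DGraph) where
  fN : G.N → H.N
  fA : G.A → H.A
  hsrc : ∀ a, H.src (fA a) = fN (G.src a)
  htgt : ∀ a, H.tgt (fA a) = fN (G.tgt a)

/-- Composition of graph morphisms. -/
def Hom.comp {G H K : DGraph} (g : Hom H K) (f : Hom G H) : Hom G K where
  fN := g.fN ∘ f.fN
  fA := g.fA ∘ f.fA
  hsrc a := by simp [g.hsrc, f.hsrc]
  htgt a := by simp [g.htgt, f.htgt]

/-- The arcs of the subobject classifier of graphs. -/
inductive OmegaA | zero | s | t | st | top
deriving DecidableEq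

/-- The subobject classifier graph `Ω`: nodes are `Bool` (`true` = "in",
`false` = "out"); arcs `0_A : out→out`, `s : in→out`, `t : out→in`,
`st : in→in`, `A : in→in`. -/
def Omega : DGraph where
  N := Bool
  A := OmegaA
  src a := match a with
    | .zero => false | .s => true | .t => false | .st => true | .top => true
  tgt a := match a with
    | .zero => false | .s => false | .t => true | .st => true | .top => true

/-- A subgraph of `G`, given by a set of nodes and a set of arcs whose
endpoints belong to the node set. -/
def IsSubgraph (G : DGraph) (SN : Set G.N) (SA : Set G.A) : Prop :=
  ∀ a ∈ SA, G.src a ∈ SN ∧ G.tgt a ∈ SN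

/-- `χ : G → Ω` classifies the subgraph `(SN, SA)`: the subgraph is the pullback
of `⊤ : 1 → Ω` (picking the node `true` and the arc `top`) along `χ`. -/
def Classifies {G : DGraph} (χ : Hom G Omega) (SN : Set G.N) (SA : Set G.A) : Prop :=
  (∀ n, n ∈ SN ↔ χ.fN n = true) ∧ (∀ a, a ∈ SA ↔ χ.fA a = OmegaA.top)

/-- The order on the arcs of `Ω`: `0_A < s, t < st < A` with `s, t` incomparable. -/
def leA : OmegaA → OmegaA → Prop := fun x y =>
  x = y ∨ x = OmegaA.zero ∨ y = OmegaA.top ∨ (x ≠ OmegaA.top ∧ y = OmegaA.st)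

/-- The meet on the arcs of `Ω` with respect to the order
`0_A < s, t < st < A` (`s`, `t` incomparable). -/
def meetA : OmegaA → OmegaA → OmegaA
  | .top, x => x
  | x, .top => x
  | .zero, _ => .zero
  | _, .zero => .zero
  | .st, x => x
  | x, .st => x
  | .s, .s => .s
  | .t, .t => .t
  | .s, .t => .zero
  | .t, .s => .zero

/-- Componentwise product of graphs. -/
def prodG (G H : DGraph) : DGraph :=
  ⟨G.N × H.N, G.A × H.A, fun a => (G.src a.1, H.src a.2), fun a => (G.tgt a.1, H.tgt a.2)⟩

instance : DecidableRel leA := fun x y => by unfold leA; infer_instance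

theorem Omega.arc_eq_of_src_tgt_eq {x y : OmegaA} (hx : x ≠ .top) (hy : y ≠ .top)
    (hsrc : Omega.src x = Omega.src y) (htgt : Omega.tgt x = Omega.tgt y) : x = y := by
  cases x <;> cases y <;> first | rfl | simp_all [Omega]

/-- Away from `⊤`, an arc of `Ω` is determined by its endpoints, and those are forced by the
node part. -/
theorem Classifies.fA_eq {G : DGraph} {SN : Set G.N} {SA : Set G.A} {χ ψ : Hom G Omega}
    (hχ : Classifies χ SN SA) (hψ : Classifies ψ SN SA) : χ.fA = ψ.fA := by
  have hN : χ.fN = ψ.fN := funext fun n => Bool.eq_iff_iff.mpr ((hχ.1 n).symm.trans (hψ.1 n))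
  funext a
  by_cases ha : a ∈ SA
  · exact ((hχ.2 a).mp ha).trans ((hψ.2 a).mp ha).symm
  · refine Omega.arc_eq_of_src_tgt_eq (mt (hχ.2 a).mpr ha) (mt (hψ.2 a).mpr ha) ?_ ?_
    · rw [χ.hsrc, ψ.hsrc, hN]
    · rw [χ.htgt, ψ.htgt, hN]

theorem meetA_leA_left (a b : OmegaA) : leA (meetA a b) a := by
  cases a <;> cases b <;> decide

theorem meetA_leA_right (a b : OmegaA) : leA (meetA a b) b := by
  cases a <;> cases b <;> decide

theorem leA_meetA {a b c : OmegaA} : leA c a → leA c b → leA c (meetA a b) := by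
  cases a <;> cases b <;> cases c <;> decide

theorem meetA_eq_top_iff (a b : OmegaA) : meetA a b = .top ↔ a = .top ∧ b = .top := by
  cases a <;> cases b <;> decide

def Omega.wedge : Hom (prodG Omega Omega) Omega where
  fN n := n.1 && n.2
  fA p := meetA p.1 p.2
  hsrc := by rintro ⟨a, b⟩; cases a <;> cases b <;> rfl
  htgt := by rintro ⟨a, b⟩; cases a <;> cases b <;> rfl

theorem Omega.wedge_classifies :
    Classifies Omega.wedge ({(true, true)} : Set (prodG Omega Omega).N)
      ({(OmegaA.top, OmegaA.top)} : Set (prodG Omega Omega).A) :=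
  ⟨fun _ => Set.mem_singleton_iff.trans (Prod.ext_iff.trans Bool.and_eq_true_iff.symm),
    fun ⟨a, b⟩ => Set.mem_singleton_iff.trans (Prod.ext_iff.trans (meetA_eq_top_iff a b).symm)⟩

/-- the conjunction `∧ : Ω × Ω → Ω`, i.e. the characteristic map of
`⟨⊤,⊤⟩ : 1 → Ω × Ω` (whose image has node `(true,true)` and arc `(A,A)`),
computes on arcs the meet for the order `0_A < s, t < st < A`. -/
theorem wedge_is_meet (χ : Hom (prodG Omega Omega) Omega)
    (hχ : Classifies χ ({((true : Bool), (true : Bool))} : Set (prodG Omega Omega).N)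
      ({(OmegaA.top, OmegaA.top)} : Set (prodG Omega Omega).A)) :
    ∀ p : OmegaA × OmegaA,
      leA (χ.fA p) p.1 ∧ leA (χ.fA p) p.2 ∧
        ∀ c, leA c p.1 → leA c p.2 → leA c (χ.fA p) := by
  rw [hχ.fA_eq Omega.wedge_classifies]
  exact fun p => ⟨meetA_leA_left p.1 p.2, meetA_leA_right p.1 p.2, fun _ => leA_meetA⟩
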